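/- For all reals m > 0, a > 0 and b ≥ 0, one has ∫₀^∞ u^{m−1} e^{−a·u} I₀(2√(b·u)) du = (Γ(m)/a^m) · ₁F₁(m; 1; b/a). -/

import Mathlib

/-!
Expand `I₀(2√(bu)) = ∑ (bu)ᵏ/(k!)²` and integrate term by term: each term is a Gamma integral,
`∫₀^∞ u^(m+k-1) e^(-au) du = Γ(m+k)/a^(m+k)`, and `Γ(m+k) = Γ(m) (m)ₖ` turns the resulting series
into `Γ(m)/aᵐ · ₁F₁(m; 1; b/a)`. The interchange is justified because all terms are nonnegative
and the series of their integrals converges.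
-/

open Real MeasureTheory

/-- Rising factorial (Pochhammer symbol) `(a)_k` for a real `a`. -/
noncomputable def risingFactorial (a : ℝ) (k : ℕ) : ℝ :=
  ∏ i ∈ Finset.range k, (a + i)

/-- The Kummer confluent hypergeometric function `₁F₁(a; 1; z)`. -/
noncomputable def kummer1F1 (a z : ℝ) : ℝ :=
  ∑' k : ℕ, risingFactorial a k / (Nat.factorial k : ℝ) ^ 2 * z ^ k

/-- The modified Bessel function of the first kind of order zero. -/
noncomputable def besselI0 (x : ℝ) : ℝ :=
  ∑' k : ℕ, (x / 2) ^ (2 * k) / (Nat.factorial k : ℝ) ^ 2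

open Set Nat

lemma risingFactorial_succ (a : ℝ) (k : ℕ) :
    risingFactorial a (k + 1) = risingFactorial a k * (a + k) :=
  Finset.prod_range_succ _ _

lemma abs_risingFactorial_le (a : ℝ) (k : ℕ) : |risingFactorial a k| ≤ k ! * (1 + |a|) ^ k := by
  induction k with
  | zero => simp [risingFactorial]
  | succ k ih =>
    have hk : |a + k| ≤ (k + 1) * (1 + |a|) := by
      have := abs_add_le a k
      rw [Nat.abs_cast] at this
      nlinarith [abs_nonneg a, (Nat.cast_nonneg k : (0 : ℝ) ≤ k)]
    rw [risingFactorial_succ, abs_mul, factorial_succ, pow_succ]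
    push_cast
    calc |risingFactorial a k| * |a + k| ≤ (k ! * (1 + |a|) ^ k) * ((k + 1) * (1 + |a|)) :=
          mul_le_mul ih hk (abs_nonneg _) (by positivity)
      _ = (k + 1) * k ! * ((1 + |a|) ^ k * (1 + |a|)) := by ring

lemma summable_kummer1F1_series (a z : ℝ) :
    Summable fun k : ℕ => risingFactorial a k / (k ! : ℝ) ^ 2 * z ^ k := by
  refine .of_norm_bounded (Real.summable_pow_div_factorial ((1 + |a|) * |z|)) fun k => ?_
  have hk : (0 : ℝ) < k ! := by positivity
  rw [norm_mul, norm_div, norm_pow, norm_pow, Real.norm_natCast, Real.norm_eq_abs,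
    Real.norm_eq_abs, mul_pow, div_mul_eq_mul_div, div_le_div_iff₀ (by positivity) hk]
  calc |risingFactorial a k| * |z| ^ k * k ! ≤ (k ! * (1 + |a|) ^ k) * |z| ^ k * k ! := by
        gcongr; exact abs_risingFactorial_le a k
    _ = (1 + |a|) ^ k * |z| ^ k * (k ! : ℝ) ^ 2 := by ring

lemma Gamma_add_nat_eq_mul_risingFactorial {m : ℝ} (hm : ∀ i : ℕ, m + i ≠ 0) (k : ℕ) :
    Gamma (m + k) = Gamma m * risingFactorial m k := by
  induction k with
  | zero => simp [risingFactorial]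
  | succ k ih =>
    rw [cast_succ, ← add_assoc, Gamma_add_one (hm k), ih, risingFactorial_succ]
    ring

lemma besselI0_two_mul_sqrt {x : ℝ} (hx : 0 ≤ x) :
    besselI0 (2 * √x) = ∑' k : ℕ, x ^ k / (k ! : ℝ) ^ 2 := by
  simp only [besselI0, mul_div_cancel_left₀ _ (two_ne_zero' ℝ), pow_mul, sq_sqrt hx]

lemma rpow_sub_one_mul_pow {u : ℝ} (hu : 0 < u) (m : ℝ) (k : ℕ) :
    u ^ (m - 1) * u ^ k = u ^ (m + k - 1) := by
  rw [add_sub_right_comm, rpow_add_natCast hu.ne']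

theorem integral_rpow_mul_exp_mul_tsum {m a : ℝ} (hm : 0 < m) (ha : 0 < a) {c : ℕ → ℝ}
    (hc : Summable fun k : ℕ => |c k| * ((1 / a) ^ (m + k) * Gamma (m + k))) :
    ∫ u in Ioi 0, u ^ (m - 1) * exp (-(a * u)) * ∑' k : ℕ, c k * u ^ k =
      ∑' k : ℕ, c k * ((1 / a) ^ (m + k) * Gamma (m + k)) := by
  set F : ℕ → ℝ → ℝ := fun k u => c k * (u ^ (m + k - 1) * exp (-(a * u)))
  have hmk (k : ℕ) : 0 < m + k := by positivity
  have hF_int (k : ℕ) : IntegrableOn (F k) (Ioi 0) := by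
    have h := integrableOn_rpow_mul_exp_neg_mul_rpow (s := m + k - 1) (by linarith [hmk k])
      one_pos ha
    simp only [rpow_one, neg_mul] at h
    exact h.const_mul _
  have hF_norm (k : ℕ) : ∫ u in Ioi 0, ‖F k u‖ = |c k| * ((1 / a) ^ (m + k) * Gamma (m + k)) := by
    rw [← integral_rpow_mul_exp_neg_mul_Ioi (hmk k) ha, ← integral_const_mul]
    refine setIntegral_congr_fun measurableSet_Ioi fun u (hu : 0 < u) => ?_
    rw [norm_mul, Real.norm_eq_abs, Real.norm_of_nonneg (by positivity)]
  have h_sum : ∀ u ∈ Ioi (0 : ℝ),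
      u ^ (m - 1) * exp (-(a * u)) * ∑' k : ℕ, c k * u ^ k = ∑' k, F k u := by
    intro u (hu : 0 < u)
    rw [← tsum_mul_left]
    refine tsum_congr fun k => ?_
    simp only [F, ← rpow_sub_one_mul_pow hu]
    ring
  rw [setIntegral_congr_fun measurableSet_Ioi h_sum,
    ← integral_tsum_of_summable_integral_norm hF_int (by simpa only [hF_norm] using hc)]
  refine tsum_congr fun k => ?_
  rw [integral_const_mul, integral_rpow_mul_exp_neg_mul_Ioi (hmk k) ha]

theorem stmt_6 (m a b : ℝ) (hm : 0 < m) (ha : 0 < a) (hb : 0 ≤ b) :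
    ∫ u in Set.Ioi (0 : ℝ),
        u ^ (m - 1) * Real.exp (-(a * u)) * besselI0 (2 * Real.sqrt (b * u)) =
      Real.Gamma m / a ^ m * kummer1F1 m (b / a) := by
  have h_term (k : ℕ) : b ^ k / (k ! : ℝ) ^ 2 * ((1 / a) ^ (m + k) * Gamma (m + k)) =
      Gamma m / a ^ m * (risingFactorial m k / (k ! : ℝ) ^ 2 * (b / a) ^ k) := by
    rw [Gamma_add_nat_eq_mul_risingFactorial (fun i => by positivity), rpow_add (one_div_pos.2 ha),
      rpow_natCast, one_div, inv_rpow ha.le, inv_pow, div_pow]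
    field_simp
  have h_bessel : ∀ u ∈ Ioi (0 : ℝ), u ^ (m - 1) * exp (-(a * u)) * besselI0 (2 * √(b * u)) =
      u ^ (m - 1) * exp (-(a * u)) * ∑' k : ℕ, b ^ k / (k ! : ℝ) ^ 2 * u ^ k := by
    intro u (hu : 0 < u)
    simp only [besselI0_two_mul_sqrt (mul_nonneg hb hu.le), mul_pow, mul_div_right_comm]
  have h_summable : Summable fun k : ℕ =>
      |b ^ k / (k ! : ℝ) ^ 2| * ((1 / a) ^ (m + k) * Gamma (m + k)) := by
    simpa only [abs_of_nonneg (by positivity : 0 ≤ b ^ _ / (_ ! : ℝ) ^ 2), h_term] using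
      (summable_kummer1F1_series m (b / a)).mul_left (Gamma m / a ^ m)
  rw [setIntegral_congr_fun measurableSet_Ioi h_bessel,
    integral_rpow_mul_exp_mul_tsum hm ha h_summable, kummer1F1, ← tsum_mul_left]
  exact tsum_congr h_term
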